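/- Let F be a field and for 1 ≤ i < j ≤ n let a_{ij}, b_{ij} be elements of F^2 (column vectors). For an assignment c choosing for each pair {i,j} either (u_{ij}, u_{ji}) = (a_{ij}, b_{ij}) or (b_{ij}, a_{ij}), write u_{ij} = (x_{ij}, y_{ij})ᵀ and define the polynomial q^c_i(t) = ∏_{j≠i} (x_{ij} + y_{ij} t). If char F = 0 and det(a_{ij}, b_{ij}) ≠ 0 for all i < j (i.e., each pair is a basis of F²), then there exists an assignment c for which q^c_1, ..., q^c_n are linearly independent in F[t]_{<n}. -/

import Mathlib

open Finset Polynomial Equiv Equiv.Perm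

/-- The vector placed on the oriented edge `(i, j)` by an assignment `c`
(`c e = true` means the pair at edge `e` is swapped). -/
def vecOnEdge {F : Type*} [Field F] (n : ℕ)
    (a : Fin n → Fin n → Fin 2 → (Fin 2 → F))
    (c : {e : Fin n × Fin n // e.1 < e.2} → Bool) (i j : Fin n) : Fin 2 → F :=
  if h : i < j then a i j (if c ⟨(i, j), h⟩ then 1 else 0)
  else if h' : j < i then a j i (if c ⟨(j, i), h'⟩ then 0 else 1)
  else 0

/-- The polynomial `q^c_i = ∏_{j ≠ i} (x_{ij} + y_{ij} t)` attached to vertex `i`. -/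
noncomputable def vertexPolyF {F : Type*} [Field F] (n : ℕ)
    (a : Fin n → Fin n → Fin 2 → (Fin 2 → F))
    (c : {e : Fin n × Fin n // e.1 < e.2} → Bool) (i : Fin n) : Polynomial F :=
  ∏ j ∈ Finset.univ.erase i,
    (C (vecOnEdge n a c i j 0) + C (vecOnEdge n a c i j 1) * X)

namespace SpinorAux

abbrev Edge (n : ℕ) := {e : Fin n × Fin n // e.1 < e.2}

variable {F : Type*} [Field F] {n : ℕ}

/-- sign of an assignment -/
def esign (c : Edge n → Bool) : F := ∏ e : Edge n, (if c e then (-1 : F) else 1)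

/-- determinant of the pair at an edge -/
def dA (a : Fin n → Fin n → Fin 2 → (Fin 2 → F)) (e : Edge n) : F :=
  a e.1.1 e.1.2 0 0 * a e.1.1 e.1.2 1 1 - a e.1.1 e.1.2 0 1 * a e.1.1 e.1.2 1 0

def ind (T : Fin n → Finset (Fin n)) (i j : Fin n) : Fin 2 := if j ∈ T i then 1 else 0

def PiT (σ : Perm (Fin n)) : Finset (Fin n → Finset (Fin n)) :=
  Fintype.piFinset fun i => (univ.erase i).powersetCard (σ i : ℕ)

def delta (a : Fin n → Fin n → Fin 2 → (Fin 2 → F)) (T : Fin n → Finset (Fin n))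
    (e : Edge n) : F :=
  if (e.1.2 ∈ T e.1.1) ↔ (e.1.1 ∈ T e.1.2) then 0
  else if e.1.1 ∈ T e.1.2 then dA a e else - dA a e

def Tσ (σ : Perm (Fin n)) (i : Fin n) : Finset (Fin n) :=
  (univ.erase i).filter fun j => σ j < σ i

def Phi (a : Fin n → Fin n → Fin 2 → (Fin 2 → F)) (T : Fin n → Finset (Fin n))
    (e : Edge n) (b : Bool) : F :=
  (if b then (-1 : F) else 1) *
    (a e.1.1 e.1.2 (if b then 1 else 0) (ind T e.1.1 e.1.2) *
     a e.1.1 e.1.2 (if b then 0 else 1) (ind T e.1.2 e.1.1))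

section lemmas
variable (a : Fin n → Fin n → Fin 2 → (Fin 2 → F)) (c : Edge n → Bool)

lemma vec_fst (e : Edge n) :
    vecOnEdge n a c e.1.1 e.1.2 = a e.1.1 e.1.2 (if c e then 1 else 0) := by
  have he : (⟨(e.1.1, e.1.2), e.2⟩ : Edge n) = e := Subtype.ext rfl
  rw [vecOnEdge, dif_pos e.2, he]

lemma vec_snd (e : Edge n) :
    vecOnEdge n a c e.1.2 e.1.1 = a e.1.1 e.1.2 (if c e then 0 else 1) := by
  have he : (⟨(e.1.1, e.1.2), e.2⟩ : Edge n) = e := Subtype.ext rfl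
  rw [vecOnEdge, dif_neg (lt_asymm e.2), dif_pos e.2, he]

lemma coeff_vertexPolyF (i : Fin n) (k : ℕ) :
    (vertexPolyF n a c i).coeff k =
      ∑ T ∈ (univ.erase i).powersetCard k,
        ∏ j ∈ univ.erase i, vecOnEdge n a c i j (if j ∈ T then 1 else 0) := by
  classical
  set x : Fin n → F := fun j => vecOnEdge n a c i j 0 with hx
  set y : Fin n → F := fun j => vecOnEdge n a c i j 1 with hy
  have hmain : (∏ j ∈ Finset.univ.erase i, (C (x j) + C (y j) * X)).coeff k =
      ∑ T ∈ (univ.erase i).powersetCard k,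
        ∏ j ∈ univ.erase i, (if j ∈ T then y j else x j) := by
    set s := univ.erase i with hs
    have h1 : ∀ j ∈ s, (C (x j) + C (y j) * X) = (C (y j) * X + C (x j)) :=
      fun j _ => add_comm _ _
    rw [Finset.prod_congr rfl h1, Finset.prod_add]
    have h2 : ∀ t ∈ s.powerset,
        ((∏ j ∈ t, C (y j) * X) * ∏ j ∈ s \ t, C (x j))
          = C ((∏ j ∈ t, y j) * ∏ j ∈ s \ t, x j) * X ^ t.card := by
      intro t ht
      rw [Finset.prod_mul_distrib, Finset.prod_const, map_mul, map_prod, map_prod]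
      ring
    rw [Finset.sum_congr rfl h2, finset_sum_coeff]
    have h3 : ∀ t ∈ s.powerset,
        (C ((∏ j ∈ t, y j) * ∏ j ∈ s \ t, x j) * X ^ t.card).coeff k
          = if t.card = k then ((∏ j ∈ t, y j) * ∏ j ∈ s \ t, x j) else 0 := by
      intro t ht
      rw [coeff_C_mul, coeff_X_pow]
      by_cases h : k = t.card <;> simp [h, eq_comm]
    rw [Finset.sum_congr rfl h3, Finset.sum_ite, Finset.sum_const_zero, add_zero,
      powersetCard_eq_filter]
    refine Finset.sum_congr rfl fun t ht => ?_
    rw [mem_filter, mem_powerset] at ht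
    rw [Finset.prod_ite, Finset.filter_mem_eq_inter, Finset.inter_eq_right.2 ht.1,
      ← Finset.sdiff_eq_filter]
  rw [vertexPolyF, hmain]
  refine Finset.sum_congr rfl fun T _ => Finset.prod_congr rfl fun j _ => ?_
  rw [apply_ite (vecOnEdge n a c i j)]

lemma det_expand :
    (Matrix.det fun k i : Fin n => (vertexPolyF n a c i).coeff k) =
      ∑ σ : Perm (Fin n), ((sign σ : ℤ) : F) *
        ∑ T ∈ PiT σ, ∏ i, ∏ j ∈ univ.erase i, vecOnEdge n a c i j (ind T i j) := by
  classical
  rw [show (fun k i : Fin n => (vertexPolyF n a c i).coeff k) = Matrix.of (fun k i : Fin n => (vertexPolyF n a c i).coeff k) from rfl, Matrix.det_apply]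
  refine Finset.sum_congr rfl fun σ _ => ?_
  rw [Units.smul_def, zsmul_eq_mul]
  congr 1
  calc (∏ i, (vertexPolyF n a c i).coeff (σ i : ℕ))
      = ∏ i, ∑ T ∈ (univ.erase i).powersetCard (σ i : ℕ),
          ∏ j ∈ univ.erase i, vecOnEdge n a c i j (if j ∈ T then 1 else 0) :=
        Finset.prod_congr rfl fun i _ => coeff_vertexPolyF a c i _
    _ = _ := by
        rw [PiT, Finset.prod_univ_sum]
        refine Finset.sum_congr rfl fun T _ => Finset.prod_congr rfl fun i _ =>
          Finset.prod_congr rfl fun j _ => rfl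

lemma pair_prod (φ : Fin n → Fin n → F) :
    ∏ i, ∏ j ∈ univ.erase i, φ i j = ∏ e : Edge n, (φ e.1.1 e.1.2 * φ e.1.2 e.1.1) := by
  classical
  have h1 : ∏ i, ∏ j ∈ univ.erase i, φ i j
      = ∏ p ∈ (univ : Finset (Fin n)).offDiag, φ p.1 p.2 := by
    rw [show (univ : Finset (Fin n)).offDiag = (univ ×ˢ univ).filter (fun p : Fin n × Fin n => p.1 ≠ p.2) by ext p; simp [mem_offDiag], Finset.prod_filter,
      Finset.prod_product' (f := fun i j => if i ≠ j then φ i j else 1)]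
    refine Finset.prod_congr rfl fun i _ => ?_
    rw [Finset.prod_ite, Finset.prod_const_one, mul_one]
    refine Finset.prod_congr ?_ fun _ _ => rfl
    ext j; simp [mem_erase, ne_comm, eq_comm]
  have h2 : (univ : Finset (Fin n)).offDiag
      = ((univ : Finset (Fin n)).offDiag.filter fun p => p.1 < p.2)
        ∪ ((univ : Finset (Fin n)).offDiag.filter fun p => ¬ p.1 < p.2) :=
    (Finset.filter_union_filter_not_eq _ _).symm
  rw [h1, h2, Finset.prod_union (Finset.disjoint_filter_filter_not _ _ _)]
  have h3 : ∏ p ∈ (univ : Finset (Fin n)).offDiag.filter (fun p => ¬ p.1 < p.2), φ p.1 p.2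
      = ∏ p ∈ (univ : Finset (Fin n)).offDiag.filter (fun p => p.1 < p.2), φ p.2 p.1 := by
    refine Finset.prod_nbij' Prod.swap Prod.swap ?_ ?_ ?_ ?_ ?_ <;>
      simp +contextual [Finset.mem_filter, Finset.mem_offDiag, ne_comm] <;>
      intro x y hxy hlt <;> omega
  rw [h3, ← Finset.prod_mul_distrib]
  rw [Finset.prod_subtype ((univ : Finset (Fin n)).offDiag.filter (fun p => p.1 < p.2))
    (p := fun p : Fin n × Fin n => p.1 < p.2)
    (fun p => ⟨fun h => (mem_filter.1 h).2,
      fun h => mem_filter.2 ⟨mem_offDiag.2 ⟨mem_univ _, mem_univ _, ne_of_lt h⟩, h⟩⟩)]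

lemma Phi_sum (T : Fin n → Finset (Fin n)) (e : Edge n) :
    Phi a T e true + Phi a T e false = delta a T e := by
  by_cases h1 : e.1.2 ∈ T e.1.1 <;> by_cases h2 : e.1.1 ∈ T e.1.2 <;>
    simp [Phi, delta, dA, ind, h1, h2] <;> ring

lemma sum_c (T : Fin n → Finset (Fin n)) :
    ∑ c : Edge n → Bool,
        esign c * ∏ i, ∏ j ∈ univ.erase i, vecOnEdge n a c i j (ind T i j)
      = ∏ e : Edge n, delta a T e := by
  classical
  have hW : ∀ c : Edge n → Bool,
      esign c * ∏ i, ∏ j ∈ univ.erase i, vecOnEdge n a c i j (ind T i j)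
        = ∏ e : Edge n, Phi a T e (c e) := by
    intro c
    rw [pair_prod (fun i j => vecOnEdge n a c i j (ind T i j)), esign,
      ← Finset.prod_mul_distrib]
    refine Finset.prod_congr rfl fun e _ => ?_
    rw [Phi, vec_fst, vec_snd]
  rw [Finset.sum_congr rfl fun c _ => hW c]
  have hps := Finset.prod_univ_sum (fun _ : Edge n => (Finset.univ : Finset Bool))
    (fun e b => Phi a T e b)
  rw [Fintype.piFinset_univ] at hps
  rw [← hps]
  exact Finset.prod_congr rfl fun e _ => by rw [Fintype.sum_bool, Phi_sum]

lemma signAux_eq_sign (σ : Perm (Fin n)) : signAux σ = sign σ := by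
  match n, σ with
  | 0, σ =>
    have : σ = 1 := Subsingleton.elim _ _
    simp [this, signAux_one]
  | 1, σ =>
    have : σ = 1 := Subsingleton.elim _ _
    simp [this, signAux_one]
  | (m+2), σ =>
    have hsurj : Function.Surjective (MonoidHom.mk' (signAux (n := m+2)) signAux_mul) := by
      intro u
      rcases Int.units_eq_one_or u with h | h
      · exact ⟨1, by simp [h, signAux_one]⟩
      · exact ⟨Equiv.swap 0 1, by
          simp only [MonoidHom.mk'_apply, h]
          exact signAux_swap (zero_ne_one (α := Fin (m+2)))⟩
    exact DFunLike.congr_fun (eq_sign_of_surjective_hom hsurj) σ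

lemma prod_sign (σ : Perm (Fin n)) :
    (∏ e : Edge n, if σ e.1.1 < σ e.1.2 then (1 : F) else -1) = ((sign σ : ℤ) : F) := by
  classical
  rw [← signAux_eq_sign σ, signAux]
  have hcast : ((((∏ x ∈ finPairsLT n, if σ x.1 ≤ σ x.2 then (-1 : ℤˣ) else 1) : ℤˣ) : ℤ) : F)
      = ∏ x ∈ finPairsLT n, if σ x.1 ≤ σ x.2 then (-1 : F) else 1 := by
    push_cast [apply_ite (fun (u : ℤˣ) => ((u : ℤ) : F))]
    rfl
  rw [hcast]
  refine Finset.prod_bij (fun (e : Edge n) _ => (⟨e.1.2, e.1.1⟩ : Σ _ : Fin n, Fin n)) ?_ ?_ ?_ ?_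
  · intro e _; exact mem_finPairsLT.2 e.2
  · intro e _ e' _ h
    apply Subtype.ext
    have h1 : e.1.2 = e'.1.2 := congrArg Sigma.fst h
    have h2 : e.1.1 = e'.1.1 := by
      have := congrArg (fun x : Σ _ : Fin n, Fin n => x.2) h
      simpa using this
    exact Prod.ext h2 h1
  · intro x hx
    exact ⟨⟨(x.2, x.1), mem_finPairsLT.1 hx⟩, mem_univ _, rfl⟩
  · intro e _
    rcases lt_or_ge (σ e.1.1) (σ e.1.2) with h | h
    · rw [if_pos h, if_neg (not_le.2 h)]
    · rw [if_neg (not_lt.2 h), if_pos h]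

lemma tournament_trans (T : Fin n → Finset (Fin n)) (hsub : ∀ i, T i ⊆ univ.erase i)
    (htour : ∀ i j : Fin n, i ≠ j → (j ∈ T i ↔ ¬ i ∈ T j)) (σ : Perm (Fin n))
    (hcard : ∀ i, (T i).card = σ i) : ∀ i j, j ∈ T i ↔ (σ j : ℕ) < σ i := by
  classical
  have key : ∀ j i : Fin n, (σ j : ℕ) < σ i → j ∈ T i := by
    intro j i hlt
    set S : Finset (Fin n) := univ.filter fun u => (σ u : ℕ) ≤ σ j with hS
    set k : ℕ := (σ j : ℕ) with hk
    have himg : S.image (fun u => (σ u : ℕ)) = Finset.range (k + 1) := by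
      ext m
      simp only [mem_image, mem_filter, mem_univ, true_and, mem_range, hS]
      constructor
      · rintro ⟨u, hu, rfl⟩; omega
      · intro hm
        have hmn : m < n := lt_of_le_of_lt (by omega : m ≤ k) (σ j).2
        refine ⟨σ.symm ⟨m, hmn⟩, ?_, ?_⟩ <;> simp
        omega
    have hinj : ∀ u ∈ S, ∀ v ∈ S, (σ u : ℕ) = (σ v : ℕ) → u = v := by
      intro u _ v _ h
      exact σ.injective (Fin.ext h)
    have hScard : S.card = k + 1 := by
      rw [← Finset.card_image_of_injOn hinj, himg, Finset.card_range]
    have hsumS : (∑ i ∈ S, (T i).card) * 2 = S.card * S.card - S.card := by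
      have h1 : ∑ i ∈ S, (T i).card = ∑ i ∈ S, (σ i : ℕ) :=
        Finset.sum_congr rfl fun i _ => hcard i
      have h2 : ∑ i ∈ S, (σ i : ℕ) = ∑ m ∈ Finset.range (k + 1), m := by
        rw [← himg, Finset.sum_image hinj]
      rw [h1, h2, Finset.sum_range_id_mul_two, hScard]
      have hx : (k+1)*(k+1) = (k+1)*k + (k+1) := by ring
      rw [hx, Nat.add_sub_cancel, Nat.add_sub_cancel]
    set P : Finset (Fin n × Fin n) := S.offDiag.filter (fun p => p.2 ∈ T p.1) with hP
    set Q : Finset (Fin n × Fin n) := S.offDiag.filter (fun p => p.1 ∈ T p.2) with hQ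
    have hmemT_ne : ∀ {u v : Fin n}, v ∈ T u → v ≠ u := by
      intro u v hv; exact (Finset.mem_erase.1 (hsub u hv)).1
    have hPcard : P.card = ∑ i ∈ S, (T i ∩ S).card := by
      have hPeq : P = S.biUnion fun i => (T i ∩ S).image fun j => (i, j) := by
        ext ⟨p1, p2⟩
        simp only [hP, mem_filter, mem_offDiag, mem_biUnion, mem_image, mem_inter]
        constructor
        · rintro ⟨⟨h1, h2, h3⟩, h4⟩; exact ⟨p1, h1, p2, ⟨h4, h2⟩, rfl⟩
        · rintro ⟨i, hi, j, ⟨hj1, hj2⟩, h⟩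
          injection h with ha hb
          subst ha; subst hb
          exact ⟨⟨hi, hj2, (hmemT_ne hj1).symm⟩, hj1⟩
      rw [hPeq, Finset.card_biUnion]
      · exact Finset.sum_congr rfl fun i _ =>
          Finset.card_image_of_injective _ (fun x y h => (Prod.mk.inj h).2)
      · intro u _ v _ huv
        simp only [Finset.disjoint_left, mem_image]
        rintro p ⟨j, _, rfl⟩ ⟨j', _, h⟩
        exact huv (Prod.mk.inj h).1.symm
    have hQcard : Q.card = P.card := by
      refine (Finset.card_bij' (fun p _ => p.swap) (fun p _ => p.swap) ?_ ?_ ?_ ?_).symm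
      · intro p hp
        simp only [hP, hQ, mem_filter, mem_offDiag] at hp ⊢
        exact ⟨⟨hp.1.2.1, hp.1.1, hp.1.2.2.symm⟩, hp.2⟩
      · intro p hp
        simp only [hP, hQ, mem_filter, mem_offDiag] at hp ⊢
        exact ⟨⟨hp.1.2.1, hp.1.1, hp.1.2.2.symm⟩, hp.2⟩
      · intro p _; rfl
      · intro p _; rfl
    have hPQunion : P ∪ Q = S.offDiag := by
      ext p
      simp only [hP, hQ, mem_union, mem_filter, mem_offDiag]
      constructor
      · rintro (⟨h, _⟩ | ⟨h, _⟩) <;> exact h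
      · intro h
        by_cases hc : p.2 ∈ T p.1
        · exact Or.inl ⟨h, hc⟩
        · exact Or.inr ⟨h, ((htour p.2 p.1 h.2.2.symm).2 hc)⟩
    have hPQdisj : Disjoint P Q := by
      rw [Finset.disjoint_left]
      rintro p hp hq
      simp only [hP, hQ, mem_filter, mem_offDiag] at hp hq
      exact (htour p.1 p.2 hp.1.2.2).1 hp.2 hq.2
    have h2P : P.card * 2 = S.card * S.card - S.card := by
      have := Finset.card_union_of_disjoint hPQdisj
      rw [hPQunion, Finset.offDiag_card, hQcard] at this
      omega
    have hsum_eq : ∑ i ∈ S, (T i ∩ S).card = ∑ i ∈ S, (T i).card := by omega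
    have hterm : ∀ i ∈ S, (T i ∩ S).card = (T i).card := by
      intro i hi
      exact (Finset.sum_eq_sum_iff_of_le fun i _ => Finset.card_le_card inter_subset_left).1
        hsum_eq i hi
    have hTS : ∀ i ∈ S, T i ⊆ S := by
      intro i hi
      have hTi : T i ∩ S = T i :=
        Finset.eq_of_subset_of_card_le Finset.inter_subset_left (le_of_eq (hterm i hi).symm)
      rw [← hTi]
      exact inter_subset_right
    have hjS : j ∈ S := by simp [hS]; exact le_of_eq hk.symm
    have hiS : i ∉ S := by simp [hS]; omega
    have hij : i ≠ j := by rintro rfl; omega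
    exact (htour i j hij).2 fun hiTj => hiS (hTS j hjS hiTj)
  intro i j
  constructor
  · intro hj
    have hji : j ≠ i := (Finset.mem_erase.1 (hsub i hj)).1
    rcases lt_trichotomy (σ j : ℕ) (σ i : ℕ) with h | h | h
    · exact h
    · exact absurd (σ.injective (Fin.ext h)) hji
    · exact absurd (key i j h) ((htour i j hji.symm).1 hj)
  · exact key j i

lemma Tσ_mem (σ : Perm (Fin n)) : Tσ σ ∈ PiT σ := by
  classical
  rw [PiT, Fintype.mem_piFinset]
  intro i
  rw [mem_powersetCard]
  refine ⟨filter_subset _ _, ?_⟩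
  have h1 : Tσ σ i = univ.filter fun j => σ j < σ i := by
    ext j
    constructor
    · intro hj
      exact mem_filter.2 ⟨mem_univ _, (mem_filter.1 hj).2⟩
    · intro hj
      have h := (mem_filter.1 hj).2
      refine mem_filter.2 ⟨mem_erase.2 ⟨?_, mem_univ _⟩, h⟩
      intro hji
      subst hji
      exact lt_irrefl _ h
  rw [h1]
  have h2 : (univ.filter fun j => σ j < σ i).card = (Finset.Iio (σ i)).card := by
    refine Finset.card_bij (fun j _ => σ j) ?_ ?_ ?_
    · intro j hj; rw [Finset.mem_Iio]; exact (mem_filter.1 hj).2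
    · intro u _ v _ h; exact σ.injective h
    · intro v hv; exact ⟨σ.symm v, mem_filter.2 ⟨mem_univ _, by simpa using Finset.mem_Iio.1 hv⟩,
        (σ.apply_symm_apply v)⟩
  rw [h2, Fin.card_Iio]

lemma sum_T (σ : Perm (Fin n)) :
    ∑ T ∈ PiT σ, ∏ e : Edge n, delta a T e
      = ((sign σ : ℤ) : F) * ∏ e : Edge n, dA a e := by
  classical
  rw [Finset.sum_eq_single_of_mem (Tσ σ) (Tσ_mem σ)]
  · -- value at Tσ
    have hval : ∀ e : Edge n, delta a (Tσ σ) e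
        = (if σ e.1.1 < σ e.1.2 then (1 : F) else -1) * dA a e := by
      intro e
      have hne : e.1.1 ≠ e.1.2 := ne_of_lt e.2
      have hm1 : e.1.2 ∈ Tσ σ e.1.1 ↔ σ e.1.2 < σ e.1.1 := by
        constructor
        · intro h; exact (mem_filter.1 h).2
        · intro h; exact mem_filter.2 ⟨mem_erase.2 ⟨hne.symm, mem_univ _⟩, h⟩
      have hm2 : e.1.1 ∈ Tσ σ e.1.2 ↔ σ e.1.1 < σ e.1.2 := by
        constructor
        · intro h; exact (mem_filter.1 h).2
        · intro h; exact mem_filter.2 ⟨mem_erase.2 ⟨hne, mem_univ _⟩, h⟩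
      have hσne : σ e.1.1 ≠ σ e.1.2 := fun h => hne (σ.injective h)
      rcases hσne.lt_or_gt with h | h
      · rw [delta, if_neg, if_pos (hm2.2 h), if_pos h, one_mul]
        rw [hm1, hm2]
        intro hiff
        exact absurd (hiff.2 h) (lt_asymm h)
      · rw [delta, if_neg, if_neg, if_neg (not_lt.2 (le_of_lt h)), neg_eq_neg_one_mul]
        · rw [hm2]; exact not_lt.2 (le_of_lt h)
        · rw [hm1, hm2]
          intro hiff
          exact absurd (hiff.1 h) (lt_asymm h)
    rw [Finset.prod_congr rfl fun e _ => hval e, Finset.prod_mul_distrib, prod_sign]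
  · -- other terms vanish
    intro T hT hne
    by_cases htour : ∀ e : Edge n, ¬ ((e.1.2 ∈ T e.1.1) ↔ (e.1.1 ∈ T e.1.2))
    · exfalso
      apply hne
      rw [PiT, Fintype.mem_piFinset] at hT
      have hsub : ∀ i, T i ⊆ univ.erase i := fun i => (mem_powersetCard.1 (hT i)).1
      have hcard : ∀ i, (T i).card = σ i := fun i => (mem_powersetCard.1 (hT i)).2
      have htour' : ∀ i j : Fin n, i ≠ j → (j ∈ T i ↔ ¬ i ∈ T j) := by
        intro i j hij
        rcases hij.lt_or_gt with h | h
        · have := htour ⟨(i, j), h⟩; tauto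
        · have := htour ⟨(j, i), h⟩; tauto
      have hiff := tournament_trans T hsub htour' σ hcard
      funext i
      ext j
      constructor
      · intro h
        have hlt := (hiff i j).1 h
        have hji : j ≠ i := (mem_erase.1 (hsub i h)).1
        exact mem_filter.2 ⟨mem_erase.2 ⟨hji, mem_univ _⟩, Fin.lt_def.2 hlt⟩
      · intro h
        exact (hiff i j).2 (Fin.lt_def.1 (mem_filter.1 h).2)
    · push_neg at htour
      obtain ⟨e, he⟩ := htour
      exact Finset.prod_eq_zero (mem_univ e) (by rw [delta, if_pos he])

lemma grand :
    ∑ c : Edge n → Bool,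
        esign c * (Matrix.det fun k i : Fin n => (vertexPolyF n a c i).coeff k)
      = (Nat.factorial n : F) * ∏ e : Edge n, dA a e := by
  classical
  calc ∑ c : Edge n → Bool,
        esign c * (Matrix.det fun k i : Fin n => (vertexPolyF n a c i).coeff k)
      = ∑ c : Edge n → Bool, ∑ σ : Perm (Fin n), ((sign σ : ℤ) : F) *
          ∑ T ∈ PiT σ, esign c *
            ∏ i, ∏ j ∈ univ.erase i, vecOnEdge n a c i j (ind T i j) := by
        refine Finset.sum_congr rfl fun c _ => ?_
        rw [det_expand, Finset.mul_sum]
        refine Finset.sum_congr rfl fun σ _ => ?_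
        rw [mul_left_comm]
        congr 1
        rw [Finset.mul_sum]
    _ = ∑ σ : Perm (Fin n), ((sign σ : ℤ) : F) *
          ∑ T ∈ PiT σ, ∑ c : Edge n → Bool, esign c *
            ∏ i, ∏ j ∈ univ.erase i, vecOnEdge n a c i j (ind T i j) := by
        rw [Finset.sum_comm]
        refine Finset.sum_congr rfl fun σ _ => ?_
        rw [← Finset.mul_sum, Finset.sum_comm]
    _ = ∑ σ : Perm (Fin n), ((sign σ : ℤ) : F) *
          (((sign σ : ℤ) : F) * ∏ e : Edge n, dA a e) := by
        refine Finset.sum_congr rfl fun σ _ => ?_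
        rw [show (∑ T ∈ PiT σ, ∑ c : Edge n → Bool, esign c *
              ∏ i, ∏ j ∈ univ.erase i, vecOnEdge n a c i j (ind T i j))
            = ∑ T ∈ PiT σ, ∏ e : Edge n, delta a T e from
          Finset.sum_congr rfl fun T _ => sum_c a T, sum_T]
    _ = ∑ _σ : Perm (Fin n), ∏ e : Edge n, dA a e := by
        refine Finset.sum_congr rfl fun σ _ => ?_
        rw [← mul_assoc, ← Int.cast_mul, ← Units.val_mul, Int.units_mul_self,
          Units.val_one, Int.cast_one, one_mul]
    _ = (Nat.factorial n : F) * ∏ e : Edge n, dA a e := by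
        rw [Finset.sum_const, Finset.card_univ, Fintype.card_perm, Fintype.card_fin,
          nsmul_eq_mul]

end lemmas
end SpinorAux

/-- The field-general spinor-choice theorem: if each pair `(a_{ij}, b_{ij})` is a basis of
`F²` (char `F = 0`), then some assignment `c` makes `q^c_1, …, q^c_n` linearly
independent. -/
theorem exists_assignment_linearIndependent_field
    {F : Type*} [Field F] [CharZero F] (n : ℕ) (hn : 0 < n)
    (a : Fin n → Fin n → Fin 2 → (Fin 2 → F))
    (hbasis : ∀ i j : Fin n, i < j →
      a i j 0 0 * a i j 1 1 - a i j 0 1 * a i j 1 0 ≠ 0) :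
    ∃ c : {e : Fin n × Fin n // e.1 < e.2} → Bool,
      LinearIndependent F (vertexPolyF n a c) := by
  classical
  have hne : (Nat.factorial n : F) * ∏ e : SpinorAux.Edge n, SpinorAux.dA a e ≠ 0 := by
    refine mul_ne_zero (Nat.cast_ne_zero.2 n.factorial_ne_zero) ?_
    rw [Finset.prod_ne_zero_iff]
    exact fun e _ => hbasis e.1.1 e.1.2 e.2
  rw [← SpinorAux.grand a] at hne
  obtain ⟨c, -, hc⟩ := Finset.exists_ne_zero_of_sum_ne_zero hne
  refine ⟨c, ?_⟩
  have hdet : (Matrix.det fun k i : Fin n => (vertexPolyF n a c i).coeff k) ≠ 0 :=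
    right_ne_zero_of_mul hc
  have hunit : IsUnit (Matrix.of fun k i : Fin n => (vertexPolyF n a c i).coeff k) :=
    (Matrix.isUnit_iff_isUnit_det _).2 hdet.isUnit
  have hli := Matrix.linearIndependent_cols_iff_isUnit.2 hunit
  have hφ : LinearIndependent F
      ((LinearMap.pi fun k : Fin n => lcoeff F (k : ℕ)) ∘ (vertexPolyF n a c)) := by
    convert hli using 1
    funext i k; rfl
  exact hφ.of_comp _
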